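/- Let $F: \mathbb{R} \to \mathbb{R}$ be bounded and Lipschitz continuous, let $u_0 \in L^1(\mathbb{R})$ be nonnegative with $M = \int_{\mathbb{R}} u_0$, let $\alpha \in (0,1)$, and set $u(x,t) = t^{-\alpha/2} \int_{\mathbb{R}} F((x-y)t^{-\alpha/2}) u_0(y)\,dy$ and $Z(x,t) = t^{-\alpha/2} F(x t^{-\alpha/2})$. Then $t^{\alpha/2} \| u(\cdot,t) - M Z(\cdot,t) \|_{L^\infty(\mathbb{R})} \to 0$ as $t \to \infty$. -/

import Mathlib

open MeasureTheory Filter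

theorem stmt_11 (F : ℝ → ℝ) (K : NNReal) (hLip : LipschitzWith K F)
    (B : ℝ) (hB : ∀ x, |F x| ≤ B)
    (u₀ : ℝ → ℝ) (h0 : ∀ x, 0 ≤ u₀ x) (hint : Integrable u₀)
    (M : ℝ) (hM : M = ∫ y, u₀ y)
    (α : ℝ) (hα : α ∈ Set.Ioo (0:ℝ) 1)
    (u Z : ℝ → ℝ → ℝ)
    (hu : ∀ x t, u x t = t ^ (-(α / 2)) * ∫ y : ℝ, F ((x - y) * t ^ (-(α / 2))) * u₀ y)
    (hZ : ∀ x t, Z x t = t ^ (-(α / 2)) * F (x * t ^ (-(α / 2)))) :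
    Tendsto (fun t : ℝ => t ^ (α / 2) *
        (eLpNorm (fun x => u x t - M * Z x t) ⊤ volume).toReal)
      atTop (nhds 0) := by
  have hB0 : 0 ≤ B := le_trans (abs_nonneg _) (hB 0)
  have hFc : Continuous F := hLip.continuous
  set g : ℝ → ℝ := fun t => ∫ y : ℝ, min ((K : ℝ) * t ^ (-(α / 2)) * |y|) (2 * B) * u₀ y
    with hg_def
  -- g tends to 0
  have hs0 : Tendsto (fun t : ℝ => t ^ (-(α / 2))) atTop (nhds 0) :=
    tendsto_rpow_neg_atTop (by linarith [hα.1])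
  have hg0 : Tendsto g atTop (nhds 0) := by
    have := MeasureTheory.tendsto_integral_filter_of_dominated_convergence
        (μ := volume) (l := atTop)
        (F := fun t (y : ℝ) => min ((K : ℝ) * t ^ (-(α / 2)) * |y|) (2 * B) * u₀ y)
        (f := fun _ : ℝ => (0 : ℝ)) (bound := fun y => 2 * B * u₀ y)
        (by
          filter_upwards with t
          exact ((continuous_const.mul continuous_abs).min continuous_const).aestronglyMeasurable.mul
            hint.1)
        (by
          filter_upwards [eventually_ge_atTop (1 : ℝ)] with t ht
          filter_upwards with y
          have hsn : 0 ≤ (K : ℝ) * t ^ (-(α / 2)) * |y| :=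
            mul_nonneg (mul_nonneg K.coe_nonneg (Real.rpow_nonneg (by linarith) _))
              (abs_nonneg y)
          rw [Real.norm_eq_abs, abs_mul, abs_of_nonneg (h0 y),
            abs_of_nonneg (le_min hsn (by linarith))]
          exact mul_le_mul_of_nonneg_right (min_le_right _ _) (h0 y))
        (hint.const_mul (2 * B))
        (by
          filter_upwards with y
          have : Tendsto (fun t : ℝ => min ((K : ℝ) * t ^ (-(α / 2)) * |y|) (2 * B))
              atTop (nhds (min ((K : ℝ) * 0 * |y|) (2 * B))) := by
            exact (((tendsto_const_nhds.mul hs0).mul tendsto_const_nhds).min tendsto_const_nhds)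
          simp only [mul_zero, zero_mul] at this
          rw [min_eq_left (by linarith)] at this
          simpa using this.mul_const (u₀ y))
    simpa using this
  -- squeeze
  apply squeeze_zero' (g := g)
  · filter_upwards [eventually_ge_atTop (1 : ℝ)] with t ht
    exact mul_nonneg (Real.rpow_nonneg (by linarith) _) ENNReal.toReal_nonneg
  · filter_upwards [eventually_ge_atTop (1 : ℝ)] with t ht
    have htpos : (0 : ℝ) < t := by linarith
    set s := t ^ (-(α / 2)) with hs_def
    have hspos : 0 < s := Real.rpow_pos_of_pos htpos _
    -- g t ≥ 0
    have hgt0 : 0 ≤ g t := by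
      apply integral_nonneg
      intro y
      exact mul_nonneg (le_min (mul_nonneg (mul_nonneg K.coe_nonneg hspos.le) (abs_nonneg y))
        (by linarith)) (h0 y)
    -- pointwise bound
    have hpt : ∀ x : ℝ, |u x t - M * Z x t| ≤ s * g t := by
      intro x
      have hmeas : ∀ c : ℝ, Integrable (fun y : ℝ => F ((c - y) * s) * u₀ y) := by
        intro c
        refine hint.bdd_mul (c := B) ?_ (Filter.Eventually.of_forall fun y => ?_)
        · exact (hFc.comp (by continuity)).aestronglyMeasurable
        · simpa [Real.norm_eq_abs] using hB ((c - y) * s)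
      have hbound_int : Integrable (fun y : ℝ => min ((K : ℝ) * s * |y|) (2 * B) * u₀ y) := by
        refine hint.bdd_mul (c := 2 * B) ?_ (Filter.Eventually.of_forall fun y => ?_)
        · exact ((continuous_const.mul continuous_abs).min continuous_const).aestronglyMeasurable
        · rw [Real.norm_eq_abs, abs_of_nonneg (le_min
            (mul_nonneg (mul_nonneg K.coe_nonneg hspos.le) (abs_nonneg y)) (by linarith))]
          exact min_le_right _ _
      have key : u x t - M * Z x t
          = s * ∫ y : ℝ, (F ((x - y) * s) - F (x * s)) * u₀ y := by
        rw [hu, hZ, hM]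
        have h2 : Integrable (fun y : ℝ => F (x * s) * u₀ y) := hint.const_mul _
        have h3 : ∫ y : ℝ, (F ((x - y) * s) - F (x * s)) * u₀ y
            = (∫ y : ℝ, F ((x - y) * s) * u₀ y) - F (x * s) * ∫ y : ℝ, u₀ y := by
          rw [← integral_const_mul, ← integral_sub (hmeas x) h2]
          congr 1; ext y; ring
        rw [h3, ← hs_def]
        ring
      rw [key, abs_mul, abs_of_nonneg hspos.le]
      refine mul_le_mul_of_nonneg_left ?_ hspos.le
      have hsub : Integrable (fun y : ℝ => (F ((x - y) * s) - F (x * s)) * u₀ y) := by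
        simpa [sub_mul, Pi.sub_def] using (hmeas x).sub (hint.const_mul (F (x * s)))
      calc |∫ y : ℝ, (F ((x - y) * s) - F (x * s)) * u₀ y|
          ≤ ∫ y : ℝ, |(F ((x - y) * s) - F (x * s)) * u₀ y| := by
            simpa only [Real.norm_eq_abs] using
              norm_integral_le_integral_norm (μ := volume)
                (fun y : ℝ => (F ((x - y) * s) - F (x * s)) * u₀ y)
        _ ≤ g t := by
            apply integral_mono hsub.abs hbound_int
            intro y
            show |(F ((x - y) * s) - F (x * s)) * u₀ y|
              ≤ min ((K : ℝ) * s * |y|) (2 * B) * u₀ y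
            rw [abs_mul, abs_of_nonneg (h0 y)]
            refine mul_le_mul_of_nonneg_right (le_min ?_ ?_) (h0 y)
            · have := hLip.dist_le_mul ((x - y) * s) (x * s)
              rw [Real.dist_eq] at this
              calc |F ((x - y) * s) - F (x * s)| ≤ (K : ℝ) * |(x - y) * s - x * s| := this
                _ = (K : ℝ) * s * |y| := by
                    rw [show (x - y) * s - x * s = -(y * s) by ring, abs_neg, abs_mul,
                      abs_of_nonneg hspos.le]
                    ring
            · calc |F ((x - y) * s) - F (x * s)|
                  ≤ |F ((x - y) * s)| + |F (x * s)| := abs_sub _ _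
                _ ≤ 2 * B := by linarith [hB ((x - y) * s), hB (x * s)]
      
    -- eLpNorm bound
    have hsn : (eLpNorm (fun x => u x t - M * Z x t) ⊤ volume).toReal ≤ s * g t := by
      have h1 : eLpNorm (fun x => u x t - M * Z x t) ⊤ volume
          ≤ ENNReal.ofReal (s * g t) := by
        rw [eLpNorm_exponent_top]
        apply eLpNormEssSup_le_of_ae_bound (C := s * g t)
        filter_upwards with x
        simpa [Real.norm_eq_abs] using hpt x
      calc (eLpNorm (fun x => u x t - M * Z x t) ⊤ volume).toReal
          ≤ (ENNReal.ofReal (s * g t)).toReal := ENNReal.toReal_mono ENNReal.ofReal_ne_top h1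
        _ ≤ s * g t := le_of_eq (ENNReal.toReal_ofReal (mul_nonneg hspos.le hgt0))
    calc t ^ (α / 2) * (eLpNorm (fun x => u x t - M * Z x t) ⊤ volume).toReal
        ≤ t ^ (α / 2) * (s * g t) :=
          mul_le_mul_of_nonneg_left hsn (Real.rpow_nonneg htpos.le _)
      _ = (t ^ (α / 2) * s) * g t := by ring
      _ = g t := by
          rw [hs_def, ← Real.rpow_add htpos]
          simp
  · exact hg0
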